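/- arXiv:1401.4708 — 6 statements merged into one kernel-verified Lean document; each statement's English description precedes it below -/
import Mathlib

section
/- For a prime p ≡ 3 (mod 4) and integer k ≥ 1, the group G_{p^k} = {a + bi ∈ Z[i]/p^kZ[i] : a² + b² ≡ 1 (mod p^k)} has order p^{k−1}(p+1). -/
/-!
Since `p ≡ 3 (mod 4)`, `-1` is not a square mod `p`, so `1 + t²` is a unit of `ZMod (p ^ k)`
for every `t`. Stereographic projection from `(-1, 0)` then identifies the points `(x, y)` of the
circle with `1 + x` a unit with all of `ZMod (p ^ k)`. At the remaining points `1 - x` is a unit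
(the ring is local and `2` is a unit), and projection from `(1, 0)` identifies them with the
parameters `t` that are non-units, i.e. the `p ^ (k - 1)` multiples of `p`. Hence the circle has
`p ^ k + p ^ (k - 1)` points.
-/

open scoped Ring

def unitCircle (R : Type*) [CommRing R] : Set (R × R) := {x | x.1 ^ 2 + x.2 ^ 2 = 1}

section Stereographic

variable {R : Type*} [CommRing R]

/-- The line through `(-1, 0)` with slope `t` meets the unit circle again at `stereo t`. -/
noncomputable def stereo (t : R) : R × R :=
  ((1 - t ^ 2) * (1 + t ^ 2)⁻¹ʳ, 2 * t * (1 + t ^ 2)⁻¹ʳ)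

variable {t : R}

lemma stereo_mem_unitCircle (ht : IsUnit (1 + t ^ 2)) : stereo t ∈ unitCircle R := by
  have := Ring.mul_inverse_cancel _ ht
  simp only [unitCircle, stereo, Set.mem_ofPred_eq]
  linear_combination ((1 + t ^ 2) * (1 + t ^ 2)⁻¹ʳ + 1) * this

lemma one_add_stereo_fst (ht : IsUnit (1 + t ^ 2)) :
    1 + (stereo t).1 = 2 * (1 + t ^ 2)⁻¹ʳ := by
  linear_combination (norm := (simp only [stereo]; ring)) -Ring.mul_inverse_cancel _ ht

lemma one_sub_stereo_fst (ht : IsUnit (1 + t ^ 2)) :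
    1 - (stereo t).1 = 2 * t ^ 2 * (1 + t ^ 2)⁻¹ʳ := by
  linear_combination (norm := (simp only [stereo]; ring)) -Ring.mul_inverse_cancel _ ht

lemma stereo_snd (ht : IsUnit (1 + t ^ 2)) : (stereo t).2 = t * (1 + (stereo t).1) := by
  rw [one_add_stereo_fst ht, stereo]
  ring

lemma isUnit_two_of_forall_isUnit_one_add_sq (h : ∀ t : R, IsUnit (1 + t ^ 2)) :
    IsUnit (2 : R) := by
  simpa [one_add_one_eq_two] using h 1

lemma stereo_eq_of_mem {c : R × R} (hc : c ∈ unitCircle R) (hu : IsUnit (1 + c.1))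
    (ht : IsUnit (1 + (c.2 * (1 + c.1)⁻¹ʳ) ^ 2)) : stereo (c.2 * (1 + c.1)⁻¹ʳ) = c := by
  obtain ⟨x, y⟩ := c
  set s := (1 + x)⁻¹ʳ
  set t := y * s
  have hs : (1 + x) * s = 1 := Ring.mul_inverse_cancel _ hu
  have hr := Ring.mul_inverse_cancel _ ht
  set r := (1 + t ^ 2)⁻¹ʳ
  have hxy : x ^ 2 + y ^ 2 = 1 := hc
  have h1 : 1 + t ^ 2 = 2 * s := by
    linear_combination s ^ 2 * hxy + (2 * s - 1 - (1 + x) * s) * hs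
  rw [h1] at hr
  show ((1 - t ^ 2) * r, 2 * t * r) = (x, y)
  ext
  · linear_combination x * hr - r * h1 - 2 * r * hs
  · linear_combination y * hr

lemma isUnit_one_add_stereo_fst (h : ∀ t : R, IsUnit (1 + t ^ 2)) (t : R) :
    IsUnit (1 + (stereo t).1) := by
  rw [one_add_stereo_fst (h t)]
  exact (isUnit_two_of_forall_isUnit_one_add_sq h).mul (isUnit_ringInverse.mpr (h t))

lemma isUnit_one_sub_stereo_fst_iff (h : ∀ t : R, IsUnit (1 + t ^ 2)) (t : R) :
    IsUnit (1 - (stereo t).1) ↔ IsUnit t := by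
  rw [one_sub_stereo_fst (h t), IsUnit.mul_iff, IsUnit.mul_iff, isUnit_pow_iff two_ne_zero]
  simp [isUnit_two_of_forall_isUnit_one_add_sq h, isUnit_ringInverse.mpr (h t)]

lemma neg_fst_mem_unitCircle {c : R × R} (hc : c ∈ unitCircle R) :
    (-c.1, c.2) ∈ unitCircle R := by
  simpa [unitCircle] using hc

lemma stereo_snd_mul_inverse (h : ∀ t : R, IsUnit (1 + t ^ 2)) (t : R) :
    (stereo t).2 * (1 + (stereo t).1)⁻¹ʳ = t := by
  rw [stereo_snd (h t), Ring.mul_inverse_cancel_right _ _ (isUnit_one_add_stereo_fst h t)]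

lemma stereo_eq_of_mem_of_isUnit_one_sub (h : ∀ t : R, IsUnit (1 + t ^ 2)) {c : R × R}
    (hc : c ∈ unitCircle R) (hu : IsUnit (1 - c.1)) :
    stereo (c.2 * (1 - c.1)⁻¹ʳ) = (-c.1, c.2) := by
  simpa only [sub_eq_add_neg] using
    stereo_eq_of_mem (neg_fst_mem_unitCircle hc) (by rwa [← sub_eq_add_neg]) (h _)

lemma isUnit_one_sub_of_not_isUnit_one_add [IsLocalRing R] (h2 : IsUnit (2 : R)) {x : R}
    (hx : ¬IsUnit (1 + x)) : IsUnit (1 - x) :=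
  (IsLocalRing.isUnit_or_isUnit_of_isUnit_add (a := 1 + x) (by ring_nf; exact h2)).resolve_left hx

noncomputable def stereoEquiv (h : ∀ t : R, IsUnit (1 + t ^ 2)) :
    R ≃ {c : unitCircle R // IsUnit (1 + c.1.1)} where
  toFun t := ⟨⟨stereo t, stereo_mem_unitCircle (h t)⟩, isUnit_one_add_stereo_fst h t⟩
  invFun c := c.1.1.2 * (1 + c.1.1.1)⁻¹ʳ
  left_inv := stereo_snd_mul_inverse h
  right_inv c := Subtype.ext (Subtype.ext (stereo_eq_of_mem c.1.2 c.2 (h _)))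

/-- Projection from `(1, 0)`, written as projection from `(-1, 0)` after the reflection
`x ↦ -x`. -/
noncomputable def stereoEquivNonunits [IsLocalRing R] (h : ∀ t : R, IsUnit (1 + t ^ 2)) :
    nonunits R ≃ {c : unitCircle R // ¬IsUnit (1 + c.1.1)} where
  toFun t := ⟨⟨(-(stereo t.1).1, (stereo t.1).2),
      neg_fst_mem_unitCircle (stereo_mem_unitCircle (h t))⟩,
    by rw [← sub_eq_add_neg, isUnit_one_sub_stereo_fst_iff h]; exact t.2⟩
  invFun c := ⟨c.1.1.2 * (1 - c.1.1.1)⁻¹ʳ, fun ht ↦ c.2 <| by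
    have hu := isUnit_one_sub_of_not_isUnit_one_add (isUnit_two_of_forall_isUnit_one_add_sq h) c.2
    rw [← isUnit_one_sub_stereo_fst_iff h, stereo_eq_of_mem_of_isUnit_one_sub h c.1.2 hu,
      sub_neg_eq_add] at ht
    exact ht⟩
  left_inv t := Subtype.ext <| by
    simp only [sub_neg_eq_add]
    exact stereo_snd_mul_inverse h t
  right_inv c := by
    have hu := isUnit_one_sub_of_not_isUnit_one_add (isUnit_two_of_forall_isUnit_one_add_sq h) c.2
    ext <;> simp [stereo_eq_of_mem_of_isUnit_one_sub h c.1.2 hu]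

theorem Nat.card_unitCircle [Finite R] [IsLocalRing R] (h : ∀ t : R, IsUnit (1 + t ^ 2)) :
    Nat.card (unitCircle R) = Nat.card R + Nat.card (nonunits R) := by
  classical
  rw [← Nat.card_congr (Equiv.sumCompl fun c : unitCircle R ↦ IsUnit (1 + c.1.1)), Nat.card_sum,
    Nat.card_congr (stereoEquiv h), Nat.card_congr (stereoEquivNonunits h)]

end Stereographic

lemma Nat.card_nonunits_add_card_units (M : Type*) [Monoid M] [Finite M] :
    Nat.card (nonunits M) + Nat.card Mˣ = Nat.card M := by
  have : nonunits M = (Set.range ((↑) : Mˣ → M))ᶜ := rfl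
  rw [← Nat.card_range_of_injective Units.val_injective, this, Nat.card_coe_set_eq,
    Nat.card_coe_set_eq, Set.ncard_compl_add_ncard]

namespace ZMod

variable {p k : ℕ}

lemma isUnit_iff_castHom_ne_zero (hp : p.Prime) (hk : k ≠ 0) (a : ZMod (p ^ k)) :
    IsUnit a ↔ castHom (dvd_pow_self p hk) (ZMod p) a ≠ 0 := by
  have : NeZero (p ^ k) := ⟨pow_ne_zero k hp.ne_zero⟩
  obtain ⟨n, rfl⟩ := natCast_zmod_surjective a
  rw [isUnit_natCast_iff_not_dvd_pow hp (Nat.pos_of_ne_zero hk), map_natCast, Ne,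
    natCast_eq_zero_iff]

lemma isLocalRing_prime_pow (hp : p.Prime) (hk : k ≠ 0) : IsLocalRing (ZMod (p ^ k)) := by
  have : Fact p.Prime := ⟨hp⟩
  have : Fact (1 < p ^ k) := ⟨Nat.one_lt_pow hk hp.one_lt⟩
  refine IsLocalRing.of_isUnit_or_isUnit_one_sub_self fun a ↦ ?_
  simp only [isUnit_iff_castHom_ne_zero hp hk, map_sub, map_one, ← not_and_or]
  rintro ⟨ha, ha'⟩
  simp [ha] at ha'

lemma isUnit_one_add_sq (hp : p.Prime) (h : p % 4 = 3) (hk : k ≠ 0) (t : ZMod (p ^ k)) :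
    IsUnit (1 + t ^ 2) := by
  have : Fact p.Prime := ⟨hp⟩
  rw [isUnit_iff_castHom_ne_zero hp hk, map_add, map_one, map_pow]
  intro h0
  exact exists_sq_eq_neg_one_iff.mp ⟨_, by linear_combination -h0⟩ h

lemma card_nonunits_prime_pow (hp : p.Prime) (hk : k ≠ 0) :
    Nat.card (nonunits (ZMod (p ^ k))) = p ^ (k - 1) := by
  have : NeZero (p ^ k) := ⟨pow_ne_zero k hp.ne_zero⟩
  have := Nat.card_nonunits_add_card_units (ZMod (p ^ k))
  rw [Nat.card_eq_fintype_card (α := (ZMod (p ^ k))ˣ), card_units_eq_totient,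
    Nat.totient_prime_pow hp (Nat.pos_of_ne_zero hk), Nat.card_zmod] at this
  obtain ⟨j, rfl⟩ := Nat.exists_eq_succ_of_ne_zero hk
  obtain ⟨q, rfl⟩ := Nat.exists_eq_succ_of_ne_zero hp.ne_zero
  simp only [Nat.succ_sub_one, pow_succ] at this ⊢
  nlinarith

end ZMod

theorem G_card_prime_pow_three_mod_four (p : ℕ) (hp : p.Prime) (h : p % 4 = 3)
    (k : ℕ) (hk : 1 ≤ k) :
    Nat.card {x : ZMod (p ^ k) × ZMod (p ^ k) // x.1 ^ 2 + x.2 ^ 2 = 1} =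
      p ^ (k - 1) * (p + 1) := by
  have hk0 : k ≠ 0 := Nat.one_le_iff_ne_zero.mp hk
  have : NeZero (p ^ k) := ⟨pow_ne_zero k hp.ne_zero⟩
  have := ZMod.isLocalRing_prime_pow hp hk0
  have hcard := Nat.card_unitCircle (ZMod.isUnit_one_add_sq hp h hk0)
  rw [Nat.card_zmod, ZMod.card_nonunits_prime_pow hp hk0] at hcard
  obtain ⟨j, rfl⟩ := Nat.exists_eq_add_of_le' hk
  rw [Nat.add_sub_cancel, pow_succ] at hcard ⊢
  exact hcard.trans (by ring)
end

section
/- If m and n are coprime positive integers, then G_{mn} is isomorphic to G_m × G_n, and consequently Φ(mn) = Φ(m)Φ(n), where Φ(n) = |G_n|. -/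
/-- Gaussian multiplication on pairs, modelling `ℤ[i]/nℤ[i]`. -/
def gmul {n : ℕ} (x y : ZMod n × ZMod n) : ZMod n × ZMod n :=
  (x.1 * y.1 - x.2 * y.2, x.1 * y.2 + x.2 * y.1)

/-- The set of norm-one elements of `ℤ[i]/nℤ[i]`. -/
def Gsub (n : ℕ) : Type := {x : ZMod n × ZMod n // x.1 ^ 2 + x.2 ^ 2 = 1}

instance {n : ℕ} : Mul (Gsub n) :=
  ⟨fun x y => ⟨gmul x.1 y.1, by
    have hx := x.2
    have hy := y.2
    have key : (x.1.1 * y.1.1 - x.1.2 * y.1.2) ^ 2 + (x.1.1 * y.1.2 + x.1.2 * y.1.1) ^ 2 =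
        (x.1.1 ^ 2 + x.1.2 ^ 2) * (y.1.1 ^ 2 + y.1.2 ^ 2) := by ring
    simp only [gmul]
    rw [key, hx, hy, one_mul]⟩⟩

/-!
The Chinese remainder theorem gives a ring isomorphism `ZMod (m * n) ≃+* ZMod m × ZMod n`.
The circle `a ^ 2 + b ^ 2 = 1` with Gaussian multiplication is functorial in the ring, so a ring
isomorphism induces a multiplicative bijection of circles, and the circle of a product of rings is
the product of the circles.
-/

/-- `Gsub n` is by definition `UnitCircle (ZMod n)`, with the same multiplication. -/
def UnitCircle (R : Type*) [CommRing R] : Type _ := {x : R × R // x.1 ^ 2 + x.2 ^ 2 = 1}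

namespace UnitCircle

variable {R S : Type*} [CommRing R] [CommRing S]

/-- Multiplication of norm-one elements `a + b i` of `R[i]`. -/
instance : Mul (UnitCircle R) :=
  ⟨fun x y => ⟨(x.1.1 * y.1.1 - x.1.2 * y.1.2, x.1.1 * y.1.2 + x.1.2 * y.1.1), by
    linear_combination (y.1.1 ^ 2 + y.1.2 ^ 2) * x.2 + y.2⟩⟩

@[ext]
theorem ext {x y : UnitCircle R} (h : x.1 = y.1) : x = y := Subtype.ext h

@[simp]
theorem mul_val (x y : UnitCircle R) :
    (x * y).1 = (x.1.1 * y.1.1 - x.1.2 * y.1.2, x.1.1 * y.1.2 + x.1.2 * y.1.1) := rfl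

def map (f : R →+* S) : UnitCircle R →ₙ* UnitCircle S where
  toFun x := ⟨Prod.map f f x.1, by
    simp only [Prod.map_fst, Prod.map_snd, ← map_pow, ← map_add, x.2, map_one]⟩
  map_mul' x y := by
    ext <;> simp only [mul_val, Prod.map_apply, map_sub, map_mul, map_add] <;> rfl

@[simp]
theorem map_val (f : R →+* S) (x : UnitCircle R) : (map f x).1 = Prod.map f f x.1 := rfl

def mapEquiv (e : R ≃+* S) : UnitCircle R ≃* UnitCircle S :=
  { map e.toRingHom with
    invFun := map e.symm.toRingHom
    left_inv := fun x => by ext <;> simp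
    right_inv := fun x => by ext <;> simp }

def prodEquiv : UnitCircle (R × S) ≃* UnitCircle R × UnitCircle S where
  toFun x := (map (RingHom.fst R S) x, map (RingHom.snd R S) x)
  invFun p := ⟨((p.1.1.1, p.2.1.1), (p.1.1.2, p.2.1.2)), Prod.ext p.1.2 p.2.2⟩
  left_inv _ := rfl
  right_inv _ := rfl
  map_mul' x y := by simp only [map_mul, Prod.mk_mul_mk]

end UnitCircle

def Gsub.chineseRemainder {m n : ℕ} (h : m.Coprime n) : Gsub (m * n) ≃* Gsub m × Gsub n :=
  (UnitCircle.mapEquiv (ZMod.chineseRemainder h)).trans UnitCircle.prodEquiv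

theorem G_mul_equiv_of_coprime_general (m n : ℕ)
    (h : Nat.Coprime m n) :
    (∃ e : Gsub (m * n) ≃ Gsub m × Gsub n, ∀ x y : Gsub (m * n), e (x * y) = e x * e y) ∧
      Nat.card (Gsub (m * n)) = Nat.card (Gsub m) * Nat.card (Gsub n) := by
  let e := Gsub.chineseRemainder h
  exact ⟨⟨e, map_mul e⟩, (Nat.card_congr e.toEquiv).trans (Nat.card_prod _ _)⟩

theorem G_mul_equiv_of_coprime (m n : ℕ) (hm : 0 < m) (hn : 0 < n)
    (h : Nat.Coprime m n) :
    (∃ e : Gsub (m * n) ≃ Gsub m × Gsub n, ∀ x y : Gsub (m * n), e (x * y) = e x * e y) ∧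
      Nat.card (Gsub (m * n)) = Nat.card (Gsub m) * Nat.card (Gsub n) :=
  G_mul_equiv_of_coprime_general m n h
end

section
/- Let p be a prime and z = a + bi a Gaussian integer with gcd(p, a² + b²) = 1. Then the imaginary part of z^{F(p)} is divisible by p, where F(p) = p−1 if p ≡ 1 (mod 4), F(p) = p+1 if p ≡ 3 (mod 4), and F(2) = 2. -/
/-!
In `R = ℤ[i]/(p)`, a ring of characteristic `p`, the Frobenius map fixes the image of `ℤ` and
sends `i` to `i ^ p`, which is `i` or `-i` according as `p ≡ 1` or `p ≡ 3 (mod 4)`. Hence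
`z ^ p ≡ z` or `z ^ p ≡ z̄ (mod p)`. In the first case `z` is invertible mod `p` because its norm
is, so `z ^ (p - 1) ≡ 1`; in the second `z ^ (p + 1) ≡ z̄ z = N(z)`. Either way `z ^ F(p)` is
congruent to a rational integer, so its imaginary part vanishes mod `p`. For `p = 2` this is
`Im (z ^ 2) = 2ab`.
-/

/-- The analogue of `n - 1` in the Gaussian setting. -/
def gaussF (n : ℕ) : ℕ :=
  if n % 4 = 1 then n - 1 else if n % 4 = 3 then n + 1 else n

theorem gaussF_of_mod_four_eq_one {n : ℕ} (h : n % 4 = 1) : gaussF n = n - 1 := by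
  simp [gaussF, h]

theorem gaussF_of_mod_four_eq_three {n : ℕ} (h : n % 4 = 3) : gaussF n = n + 1 := by
  simp [gaussF, h]

theorem intCast_pow_char {R : Type*} [CommRing R] (p : ℕ) [Fact p.Prime] [CharP R p] (n : ℤ) :
    (n : R) ^ p = n := by
  have h := congrArg (ZMod.castHom (dvd_refl p) R) (ZMod.pow_card (n : ZMod p))
  rwa [map_pow, map_intCast] at h

theorem isUnit_intCast_of_isCoprime {R : Type*} [CommRing R] {p : ℕ} [CharP R p] {n : ℤ}
    (h : IsCoprime (p : ℤ) n) : IsUnit (n : R) := by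
  obtain ⟨u, v, huv⟩ := h
  refine IsUnit.of_mul_eq_one_right (v : R) ?_
  simpa using congrArg (Int.cast : ℤ → R) huv

namespace GaussianInt

open Zsqrtd

theorem sqrtd_pow_of_mod_four_eq_one {n : ℕ} (h : n % 4 = 1) :
    (sqrtd : GaussianInt) ^ n = sqrtd := by
  rw [← Nat.div_add_mod n 4, h, pow_succ, pow_mul, show sqrtd ^ 4 = (1 : GaussianInt) by decide,
    one_pow, one_mul]

theorem sqrtd_pow_of_mod_four_eq_three {n : ℕ} (h : n % 4 = 3) :
    (sqrtd : GaussianInt) ^ n = -sqrtd := by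
  rw [← Nat.div_add_mod n 4, h, pow_add, pow_mul, show sqrtd ^ 4 = (1 : GaussianInt) by decide,
    one_pow, one_mul]
  decide

theorem natCast_mem_nonunits {n : ℕ} (hn : n ≠ 1) : (n : GaussianInt) ∈ nonunits GaussianInt := by
  rw [mem_nonunits_iff, isUnit_iff_norm_isUnit, norm_natCast, Int.isUnit_iff]
  rintro (h | h)
  · exact hn (mod_cast Int.eq_one_of_mul_eq_one_right (by positivity) h)
  · nlinarith

section Frobenius

variable {R : Type*} [CommRing R] {p : ℕ} [Fact p.Prime] [CharP R p] (f : GaussianInt →+* R)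
  (z : GaussianInt)

theorem map_pow_char : f z ^ p = f (z.re + (sqrtd : GaussianInt) ^ p * z.im) := by
  conv_lhs => rw [show z = ⟨z.re, z.im⟩ from rfl, decompose]
  simp only [map_add, map_mul, map_pow, map_intCast, add_pow_char, mul_pow, intCast_pow_char]

theorem map_pow_of_mod_four_eq_one (h : p % 4 = 1) : f z ^ p = f z := by
  rw [map_pow_char, sqrtd_pow_of_mod_four_eq_one h, ← decompose]

theorem map_pow_of_mod_four_eq_three (h : p % 4 = 3) : f z ^ p = f (star z) := by
  rw [map_pow_char, sqrtd_pow_of_mod_four_eq_three h]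
  congr 1
  ext <;> simp

end Frobenius

theorem natCast_dvd_im_of_mk_eq_intCast {p : ℕ} {w : GaussianInt} {n : ℤ}
    (h : Ideal.Quotient.mk (Ideal.span {(p : GaussianInt)}) w = n) : (p : ℤ) ∣ w.im := by
  rw [← map_intCast (Ideal.Quotient.mk (Ideal.span {(p : GaussianInt)})), ← sub_eq_zero,
    ← map_sub, Ideal.Quotient.eq_zero_iff_dvd, ← Int.cast_natCast, intCast_dvd] at h
  simpa using h.2

end GaussianInt

theorem gaussian_fermat_im (p : ℕ) (hp : p.Prime) (z : GaussianInt)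
    (hz : IsCoprime (p : ℤ) (z.re ^ 2 + z.im ^ 2)) :
    (p : ℤ) ∣ (z ^ gaussF p).im := by
  have := Fact.mk hp
  have := CharP.quotient GaussianInt p (GaussianInt.natCast_mem_nonunits hp.ne_one)
  set f := Ideal.Quotient.mk (Ideal.span {(p : GaussianInt)})
  obtain rfl | hodd := hp.eq_two_or_odd
  · exact ⟨z.re * z.im, by simp [gaussF, sq]; ring⟩
  obtain h4 | h4 : p % 4 = 1 ∨ p % 4 = 3 := by omega
  · have hnorm : z.norm = z.re ^ 2 + z.im ^ 2 := by simp [Zsqrtd.norm_def]; ring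
    have hunit : IsUnit (f z) := by
      refine isUnit_of_mul_isUnit_left (y := f (star z)) ?_
      rw [← map_mul, ← Zsqrtd.norm_eq_mul_conj, map_intCast, hnorm]
      exact isUnit_intCast_of_isCoprime hz
    have hfermat : f z ^ (p - 1) = 1 := hunit.mul_left_injective <| by
      simp only [pow_sub_one_mul hp.ne_zero, GaussianInt.map_pow_of_mod_four_eq_one f z h4, one_mul]
    refine GaussianInt.natCast_dvd_im_of_mk_eq_intCast (n := 1) ?_
    rw [gaussF_of_mod_four_eq_one h4, map_pow, hfermat, Int.cast_one]
  · refine GaussianInt.natCast_dvd_im_of_mk_eq_intCast (n := z.norm) ?_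
    rw [gaussF_of_mod_four_eq_three h4, map_pow, pow_succ,
      GaussianInt.map_pow_of_mod_four_eq_three f z h4, ← map_mul, mul_comm,
      ← Zsqrtd.norm_eq_mul_conj, map_intCast]
end

section
/- An odd Gaussian Carmichael number is square-free. -/
/-- `n` is a Gaussian Carmichael number: a composite number that is a Gaussian
Fermat pseudoprime to every base `z` with `gcd(n, z * conj z) = 1`. -/
def GaussCarmichael (n : ℕ) : Prop :=
  1 < n ∧ ¬ n.Prime ∧ ∀ z : GaussianInt, IsCoprime (n : ℤ) (Zsqrtd.norm z) →
    (n : GaussianInt) ∣ z ^ gaussF n - (star z) ^ gaussF n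


/-!
If `p ^ 2 ∣ n`, put `a = n / p`, so that `n ∣ a ^ 2`. The base `z = 1 + a i` has norm `1 + a ^ 2`,
which is coprime to `n`, and `z̄ = 1 - a i`. Expanding modulo `(a i) ^ 2` gives
`z ^ F - z̄ ^ F ≡ 2 F a i (mod n)`, so `n ∣ 2 F a`. As `n` is odd and `F = n ± 1`, `n` is coprime to
`2 F`, whence `n ∣ a = n / p`, which is absurd.
-/

lemma sq_dvd_one_add_pow_sub {R : Type*} [CommRing R] (w : R) (F : ℕ) :
    w ^ 2 ∣ (1 + w) ^ F - (1 + F * w) := by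
  induction F with
  | zero => simp
  | succ F ih =>
    have key : (1 + w) ^ (F + 1) - (1 + ((F + 1 : ℕ) : R) * w) =
        ((1 + w) ^ F - (1 + F * w)) * (1 + w) + F * w ^ 2 := by
      push_cast; ring
    rw [key]
    exact dvd_add (ih.mul_right _) (dvd_mul_left _ _)

lemma sq_dvd_one_add_pow_sub_one_sub_pow {R : Type*} [CommRing R] (w : R) (F : ℕ) :
    w ^ 2 ∣ (1 + w) ^ F - (1 - w) ^ F - 2 * F * w := by
  have key : (1 + w) ^ F - (1 - w) ^ F - 2 * F * w =
      ((1 + w) ^ F - (1 + F * w)) - ((1 + -w) ^ F - (1 + F * -w)) := by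
    ring
  have hneg := sq_dvd_one_add_pow_sub (-w) F
  rw [neg_sq] at hneg
  rw [key]
  exact dvd_sub (sq_dvd_one_add_pow_sub w F) hneg

lemma isCoprime_one_add_of_dvd {R : Type*} [CommRing R] {x y : R} (h : x ∣ y) :
    IsCoprime x (1 + y) := by
  obtain ⟨s, rfl⟩ := h
  exact ⟨-s, 1, by ring⟩

lemma coprime_two_mul_gaussF {n : ℕ} (ho : Odd n) : n.Coprime (2 * gaussF n) := by
  refine Nat.Coprime.mul_right (Nat.coprime_two_right.mpr ho) ?_
  have hn : n % 4 = 1 ∨ n % 4 = 3 := by rcases ho with ⟨k, rfl⟩; omega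
  rcases hn with hn | hn
  · rw [gaussF, if_pos hn, Nat.coprime_self_sub_right (by omega)]
    exact Nat.coprime_one_right n
  · rw [gaussF, if_neg (by omega), if_pos hn, Nat.coprime_self_add_right]
    exact Nat.coprime_one_right n

namespace GaussianInt

lemma norm_mk_one (a : ℤ) : Zsqrtd.norm (⟨1, a⟩ : GaussianInt) = 1 + a ^ 2 := by
  rw [Zsqrtd.norm_def]
  ring

lemma dvd_two_mul_mul_of_dvd_pow_sub_star_pow {n a : ℤ} (F : ℕ) (hna : n ∣ a ^ 2)
    (h : (n : GaussianInt) ∣ (⟨1, a⟩ : GaussianInt) ^ F - star ⟨1, a⟩ ^ F) :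
    n ∣ 2 * F * a := by
  set w : GaussianInt := ⟨0, a⟩
  have hz : (⟨1, a⟩ : GaussianInt) = 1 + w := by ext <;> simp [w]
  have hz' : star (⟨1, a⟩ : GaussianInt) = 1 - w := by ext <;> simp [w]
  have hw : w ^ 2 = ((-a ^ 2 : ℤ) : GaussianInt) := by ext <;> simp [w, sq]
  have hnw : (n : GaussianInt) ∣ w ^ 2 := hw ▸ Int.cast_dvd_cast _ _ (dvd_neg.mpr hna)
  rw [hz', hz] at h
  have h2Fw : (n : GaussianInt) ∣ 2 * F * w :=
    sub_sub_cancel _ (2 * F * w : GaussianInt) ▸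
      dvd_sub h (hnw.trans (sq_dvd_one_add_pow_sub_one_sub_pow w F))
  have him : (2 * F * w).im = 2 * F * a := by simp [w]
  exact him ▸ ((Zsqrtd.intCast_dvd n _).mp h2Fw).2

end GaussianInt

theorem gaussCarmichael_squarefree (n : ℕ) (ho : Odd n) (h : GaussCarmichael n) :
    Squarefree n := by
  obtain ⟨-, -, hC⟩ := h
  rw [Nat.squarefree_iff_prime_squarefree]
  rintro p hp ⟨b, hb⟩
  set a := p * b
  have hn : n = p * a := by rw [hb, mul_assoc]
  have hna : (n : ℤ) ∣ (a : ℤ) ^ 2 := ⟨b, by rw [hn]; push_cast [a]; ring⟩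
  have hcop := isCoprime_one_add_of_dvd hna
  rw [← GaussianInt.norm_mk_one] at hcop
  have h2F := GaussianInt.dvd_two_mul_mul_of_dvd_pow_sub_star_pow _ hna
    (by exact_mod_cast hC _ hcop)
  have hnda : n ∣ a := (coprime_two_mul_gaussF ho).dvd_of_dvd_mul_left (by exact_mod_cast h2F)
  have ha : a ≠ 0 := right_ne_zero_of_mul (hn ▸ ho.pos.ne')
  have hp1 : p * a ∣ 1 * a := by rwa [one_mul, ← hn]
  exact hp.one_lt.ne' (Nat.dvd_one.mp ((mul_dvd_mul_iff_right ha).mp hp1))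
end

section
/- Let p < q be odd primes. Then n = pq is a Gaussian Carmichael number if and only if q = p + 2 (twin primes) and 8 divides p + q (equivalently p ≡ 3 (mod 4)). -/
section

open ZMod

theorem gaussF_eq_sub_χ₄ {n : ℕ} (hn : Odd n) : (gaussF n : ℤ) = n - χ₄ n := by
  rw [χ₄_nat_eq_if_mod_four, gaussF]
  obtain ⟨k, rfl⟩ := hn
  split_ifs <;> omega

theorem gaussF_mul {m n : ℕ} (hm : Odd m) (hn : Odd n) :
    (gaussF (m * n) : ℤ) = n * gaussF m + χ₄ m * gaussF n := by
  rw [gaussF_eq_sub_χ₄ (hm.mul hn), gaussF_eq_sub_χ₄ hm, gaussF_eq_sub_χ₄ hn, Nat.cast_mul,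
    Nat.cast_mul, map_mul]
  ring

theorem gaussF_dvd_gaussF_mul_iff {m n : ℕ} (hm : Odd m) (hn : Odd n) :
    gaussF m ∣ gaussF (m * n) ↔ gaussF m ∣ gaussF n := by
  have hunit : IsUnit (χ₄ m) := by
    rw [χ₄_nat_eq_if_mod_four]
    split_ifs <;> simp_all [Nat.odd_iff]
  rw [← Int.natCast_dvd_natCast, gaussF_mul hm hn, dvd_add_right (dvd_mul_left _ _),
    hunit.dvd_mul_left, Int.natCast_dvd_natCast]

end

theorem gaussF_eq_gaussF_iff {p q : ℕ} (hp : Odd p) (hq : Odd q) (hpq : p < q) :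
    gaussF p = gaussF q ↔ q = p + 2 ∧ 8 ∣ p + q := by
  obtain ⟨k, rfl⟩ := hp
  obtain ⟨l, rfl⟩ := hq
  unfold gaussF
  split_ifs <;> omega

theorem star_dvd_star {R : Type*} [CommMonoid R] [StarMul R] {a b : R} (h : a ∣ b) :
    star a ∣ star b := by
  obtain ⟨c, rfl⟩ := h
  exact ⟨star c, by rw [star_mul, mul_comm]⟩

theorem IsCoprime.exists_dvd_sub_and_dvd_sub {R : Type*} [CommRing R] {a b : R}
    (h : IsCoprime a b) (x y : R) : ∃ z, a ∣ z - x ∧ b ∣ z - y := by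
  obtain ⟨u, v, huv⟩ := h
  exact ⟨x * (v * b) + y * (u * a), ⟨(y - x) * u, by linear_combination x * huv⟩,
    ⟨(x - y) * v, by linear_combination y * huv⟩⟩

theorem Int.isCoprime_of_cast_ne_zero {R : Type*} [Ring R] {r : ℕ} (hr : r.Prime)
    (hR : (r : R) = 0) {n : ℤ} (hn : (n : R) ≠ 0) : IsCoprime (r : ℤ) n :=
  (Nat.prime_iff_prime_int.mp hr).coprime_iff_not_dvd.2 fun ⟨c, hc⟩ => hn (by simp [hc, hR])

namespace Zsqrtd

variable {d : ℤ}

theorem intCast_dvd_norm_sub_norm {a : ℤ} {z w : ℤ√d} (h : (a : ℤ√d) ∣ z - w) :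
    a ∣ z.norm - w.norm := by
  rw [← intCast_dvd_intCast (d := d), Int.cast_sub, norm_eq_mul_conj, norm_eq_mul_conj,
    show z * star z - w * star w = z * star (z - w) + (z - w) * star w by rw [star_sub]; ring]
  exact dvd_add (by simpa using (star_dvd_star h).mul_left z) (h.mul_right _)

theorem mk_eq_mk_iff {r : ℕ} {z w : ℤ√d} :
    Ideal.Quotient.mk (Ideal.span {(r : ℤ√d)}) z = Ideal.Quotient.mk _ w ↔
      (z.re : ZMod r) = w.re ∧ (z.im : ZMod r) = w.im := by
  rw [Ideal.Quotient.mk_eq_mk_iff_sub_mem, Ideal.mem_span_singleton, ← Int.cast_natCast,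
    intCast_dvd, ZMod.intCast_eq_intCast_iff_dvd_sub, ZMod.intCast_eq_intCast_iff_dvd_sub,
    ← dvd_neg (b := w.re - z.re), ← dvd_neg (b := w.im - z.im)]
  simp

theorem card_quotient_span_natCast {r : ℕ} [NeZero r] :
    Nat.card (ℤ√d ⧸ Ideal.span {(r : ℤ√d)}) = r * r := by
  let f : ZMod r × ZMod r → ℤ√d ⧸ Ideal.span {(r : ℤ√d)} :=
    fun x => Ideal.Quotient.mk _ ⟨x.1.cast, x.2.cast⟩
  have hf : f.Bijective := by
    refine ⟨fun x y hxy => ?_, fun a => ?_⟩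
    · simpa [f, mk_eq_mk_iff, ZMod.intCast_zmod_cast, Prod.ext_iff] using hxy
    · obtain ⟨w, rfl⟩ := Ideal.Quotient.mk_surjective a
      exact ⟨(w.re, w.im), mk_eq_mk_iff.2 (by simp)⟩
  rw [← Nat.card_eq_of_bijective f hf, Nat.card_prod, Nat.card_zmod]

theorem natCast_dvd_pow_prime_sub {r : ℕ} (hr : r.Prime) (hodd : Odd r)
    (z : ℤ√d) : (r : ℤ√d) ∣ z ^ r - ⟨z.re, d ^ (r / 2) * z.im⟩ := by
  have : Fact r.Prime := ⟨hr⟩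
  have : CharP (ℤ√d ⧸ Ideal.span {(r : ℤ√d)}) r := CharP.quotient _ r fun hu => by
    have h1 : ((r : ℤ) : ℤ√d) ∣ 1 := by rw [Int.cast_natCast]; exact isUnit_iff_dvd_one.1 hu
    rw [intCast_dvd] at h1
    exact hr.one_lt.ne' (by exact_mod_cast Int.eq_one_of_dvd_one (by positivity) h1.1)
  set φ := Ideal.Quotient.mk (Ideal.span {(r : ℤ√d)})
  have hfix (a : ℤ) : φ a ^ r = φ a := by rw [map_intCast, ← frobenius_def, map_intCast]
  have hsqrtd : sqrtd (d := d) ^ r = ((d ^ (r / 2) : ℤ) : ℤ√d) * sqrtd := by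
    obtain ⟨k, hk⟩ := hodd
    rw [hk, show (2 * k + 1) / 2 = k by omega, pow_succ, pow_mul, sq, dmuld, Int.cast_pow]
  have hz : z = z.re + sqrtd (d := d) * z.im := decompose
  rw [← Ideal.Quotient.eq_zero_iff_dvd, map_sub, sub_eq_zero, decompose]
  conv_lhs => rw [hz]
  rw [map_pow, map_add, map_mul, add_pow_char, mul_pow, hfix, hfix, ← map_pow, hsqrtd, ← map_mul,
    ← map_add]
  congr 1
  push_cast
  ring

end Zsqrtd

namespace GaussianInt

theorem natCast_dvd_pow_sub_self {r : ℕ} (hr : r.Prime) (h4 : r % 4 = 1) (z : GaussianInt) :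
    (r : GaussianInt) ∣ z ^ r - z := by
  have := Zsqrtd.natCast_dvd_pow_prime_sub hr (Nat.odd_iff.2 (by omega)) z
  rwa [Even.neg_one_pow ⟨r / 4, by omega⟩, one_mul] at this

theorem natCast_dvd_pow_sub_star {r : ℕ} (hr : r.Prime) (h4 : r % 4 = 3) (z : GaussianInt) :
    (r : GaussianInt) ∣ z ^ r - star z := by
  have := Zsqrtd.natCast_dvd_pow_prime_sub hr (Nat.odd_iff.2 (by omega)) z
  rwa [Odd.neg_one_pow ⟨r / 4, by omega⟩, neg_one_mul, ← Zsqrtd.star_mk] at this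

theorem natCast_dvd_pow_sub_one_sub_one {r : ℕ} (hr : r.Prime) (h4 : r % 4 = 1)
    {z : GaussianInt} (hz : IsCoprime (r : ℤ) z.norm) : (r : GaussianInt) ∣ z ^ (r - 1) - 1 := by
  have hcop : IsCoprime (r : GaussianInt) z := by
    have := hz.map (Int.castRingHom GaussianInt)
    rw [eq_intCast, eq_intCast, Zsqrtd.norm_eq_mul_conj, Int.cast_natCast] at this
    exact this.of_mul_right_left
  refine hcop.dvd_of_dvd_mul_left ?_
  rw [mul_sub, mul_one, ← pow_succ', Nat.sub_add_cancel hr.one_le]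
  exact natCast_dvd_pow_sub_self hr h4 z

theorem natCast_dvd_pow_gaussF_sub {r : ℕ} (hr : r.Prime) (hodd : Odd r) {z : GaussianInt}
    (hz : IsCoprime (r : ℤ) z.norm) : (r : GaussianInt) ∣ z ^ gaussF r - star z ^ gaussF r := by
  rcases Nat.odd_mod_four_iff.1 (Nat.odd_iff.1 hodd) with h4 | h4
  · rw [gaussF_of_mod_four_eq_one h4, ← sub_sub_sub_cancel_right _ _ 1]
    exact dvd_sub (natCast_dvd_pow_sub_one_sub_one hr h4 hz)
      (natCast_dvd_pow_sub_one_sub_one hr h4 (by rwa [Zsqrtd.norm_conj]))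
  · rw [gaussF_of_mod_four_eq_three h4,
      show z ^ (r + 1) - star z ^ (r + 1) = (z ^ r - star z) * z - (star z ^ r - z) * star z by
        ring]
    have := natCast_dvd_pow_sub_star hr h4 (star z)
    rw [star_star] at this
    exact dvd_sub ((natCast_dvd_pow_sub_star hr h4 z).mul_right _) (this.mul_right _)

theorem exists_lift_eq_and_lift_star_eq {r : ℕ} [Fact r.Prime] (hr : r ≠ 2)
    (s : {s : ZMod r // s * s = ((-1 : ℤ) : ZMod r)}) (x y : ZMod r) :
    ∃ z : GaussianInt, Zsqrtd.lift s z = x ∧ Zsqrtd.lift s (star z) = y := by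
  have h2 : (2 : ZMod r) ≠ 0 := Ring.two_ne_zero (by rwa [ZMod.ringChar_zmod_n])
  have hs : (s : ZMod r) ≠ 0 := fun h => by simpa [h] using s.2
  refine ⟨⟨((x + y) / 2).cast, ((x - y) / (2 * s)).cast⟩, ?_, ?_⟩ <;>
    simp [Zsqrtd.star_mk] <;> field_simp <;> ring

end GaussianInt

def IsGaussFermatExponent (n F : ℕ) : Prop :=
  ∀ z : GaussianInt, IsCoprime (n : ℤ) z.norm → (n : GaussianInt) ∣ z ^ F - star z ^ F

theorem gaussCarmichael_iff {n : ℕ} :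
    GaussCarmichael n ↔ 1 < n ∧ ¬ n.Prime ∧ IsGaussFermatExponent n (gaussF n) :=
  Iff.rfl

theorem IsGaussFermatExponent.of_mul {m n F : ℕ} (h : m.Coprime n)
    (H : IsGaussFermatExponent (m * n) F) : IsGaussFermatExponent m F := by
  intro w hw
  obtain ⟨z, hzw, hz1⟩ := (h.cast (R := GaussianInt)).exists_dvd_sub_and_dvd_sub w 1
  have hz : IsCoprime ((m * n : ℕ) : ℤ) z.norm := by
    rw [← Int.cast_natCast] at hzw hz1
    obtain ⟨a, ha⟩ := Zsqrtd.intCast_dvd_norm_sub_norm hzw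
    obtain ⟨b, hb⟩ := Zsqrtd.intCast_dvd_norm_sub_norm hz1
    rw [sub_eq_iff_eq_add'] at ha hb
    rw [Zsqrtd.norm_one] at hb
    rw [Nat.cast_mul]
    exact IsCoprime.mul_left (ha ▸ hw.add_mul_left_right a)
      (hb ▸ isCoprime_one_right.add_mul_left_right b)
  have hzF : (m : GaussianInt) ∣ z ^ F - star z ^ F :=
    (dvd_mul_right _ (n : GaussianInt)).trans (by exact_mod_cast H z hz)
  have hcong : (m : GaussianInt) ∣ (z ^ F - star z ^ F) - (w ^ F - star w ^ F) := by
    have hstar := star_dvd_star hzw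
    rw [star_natCast, star_sub] at hstar
    rw [sub_sub_sub_comm]
    exact dvd_sub (hzw.trans (sub_dvd_pow_sub_pow _ _ _))
      (hstar.trans (sub_dvd_pow_sub_pow _ _ _))
  exact (dvd_sub_right hzF).1 hcong

theorem isGaussFermatExponent_mul_iff {m n F : ℕ} (h : m.Coprime n) :
    IsGaussFermatExponent (m * n) F ↔ IsGaussFermatExponent m F ∧ IsGaussFermatExponent n F := by
  refine ⟨fun H => ⟨H.of_mul h, (mul_comm m n ▸ H).of_mul h.symm⟩, fun ⟨Hm, Hn⟩ z hz => ?_⟩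
  rw [Nat.cast_mul] at hz ⊢
  exact h.cast.mul_dvd (Hm z hz.of_mul_left_left) (Hn z hz.of_mul_left_right)

theorem IsGaussFermatExponent.sub_one_dvd {r F : ℕ} (hr : r.Prime) (h4 : r % 4 = 1)
    (H : IsGaussFermatExponent r F) : r - 1 ∣ F := by
  have : Fact r.Prime := ⟨hr⟩
  obtain ⟨s, hs⟩ := ZMod.exists_sq_eq_neg_one_iff.2 (by omega : r % 4 ≠ 3)
  let i : {s : ZMod r // s * s = ((-1 : ℤ) : ZMod r)} := ⟨s, by rw [← hs]; push_cast; rfl⟩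
  obtain ⟨g, hg⟩ := IsCyclic.exists_generator (α := (ZMod r)ˣ)
  obtain ⟨z, hz, hzstar⟩ := GaussianInt.exists_lift_eq_and_lift_star_eq (by omega) i g 1
  have hnorm : ((z.norm : ℤ) : ZMod r) = g := by
    rw [← map_intCast (Zsqrtd.lift i), Zsqrtd.norm_eq_mul_conj, map_mul, hz, hzstar, mul_one]
  obtain ⟨c, hc⟩ :=
    H z (Int.isCoprime_of_cast_ne_zero hr (ZMod.natCast_self r) (hnorm ▸ g.ne_zero))
  have hgF : (g : ZMod r) ^ F = 1 := by
    have := congrArg (Zsqrtd.lift i) hc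
    rwa [map_sub, map_pow, map_pow, hz, hzstar, one_pow, map_mul, map_natCast,
      ZMod.natCast_self, zero_mul, sub_eq_zero] at this
  rw [← ZMod.card_units r, ← Nat.card_eq_fintype_card,
    ← orderOf_eq_card_of_forall_mem_zpowers hg]
  exact orderOf_dvd_of_pow_eq_one (Units.ext (by simpa using hgF))

theorem IsGaussFermatExponent.add_one_dvd {r F : ℕ} (hr : r.Prime) (h4 : r % 4 = 3)
    (H : IsGaussFermatExponent r F) : r + 1 ∣ F := by
  have : Fact r.Prime := ⟨hr⟩
  set I := Ideal.span {(r : GaussianInt)}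
  have : I.IsMaximal := PrincipalIdealRing.isMaximal_of_irreducible
    ((GaussianInt.prime_iff_mod_four_eq_three_of_nat_prime r).2 h4).irreducible
  let := Ideal.Quotient.field I
  have hcard : Nat.card (GaussianInt ⧸ I) = r * r := Zsqrtd.card_quotient_span_natCast
  have : Finite (GaussianInt ⧸ I) :=
    Nat.finite_of_card_ne_zero (by rw [hcard]; exact mul_ne_zero hr.ne_zero hr.ne_zero)
  obtain ⟨g, hg⟩ := IsCyclic.exists_generator (α := (GaussianInt ⧸ I)ˣ)
  have hord : orderOf g = (r - 1) * (r + 1) := by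
    rw [orderOf_eq_card_of_forall_mem_zpowers hg, Nat.card_units, hcard]
    zify [hr.one_le, Nat.one_le_iff_ne_zero.2 (mul_ne_zero hr.ne_zero hr.ne_zero)]
    ring
  obtain ⟨z, hz⟩ := Ideal.Quotient.mk_surjective (g : GaussianInt ⧸ I)
  have hstar : Ideal.Quotient.mk I (star z) = g ^ r := by
    rw [← hz, ← map_pow, Ideal.Quotient.mk_eq_mk_iff_sub_mem, Ideal.mem_span_singleton,
      ← neg_sub, dvd_neg]
    exact GaussianInt.natCast_dvd_pow_sub_star hr h4 z
  have hnorm : ((z.norm : ℤ) : GaussianInt ⧸ I) = g ^ (r + 1) := by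
    rw [← map_intCast (Ideal.Quotient.mk I), Zsqrtd.norm_eq_mul_conj, map_mul, hz, hstar,
      pow_succ']
  have hF := H z (Int.isCoprime_of_cast_ne_zero hr
    (by rw [← map_natCast (Ideal.Quotient.mk I), Ideal.Quotient.eq_zero_iff_dvd])
    (hnorm ▸ pow_ne_zero _ g.ne_zero))
  rw [← Ideal.Quotient.eq_zero_iff_dvd, map_sub, map_pow, map_pow, hz, hstar, sub_eq_zero,
    ← pow_mul] at hF
  have hgF : g ^ ((r - 1) * F) = 1 := by
    refine mul_left_cancel (a := g ^ F) ?_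
    rw [← pow_add, mul_one, Nat.sub_one_mul,
      Nat.add_sub_cancel' (Nat.le_mul_of_pos_left F hr.pos)]
    exact Units.ext (by push_cast; exact hF.symm)
  exact Nat.dvd_of_mul_dvd_mul_left (by omega) (hord ▸ orderOf_dvd_of_pow_eq_one hgF)

theorem isGaussFermatExponent_prime_iff {r F : ℕ} (hr : r.Prime) (hodd : Odd r) :
    IsGaussFermatExponent r F ↔ gaussF r ∣ F := by
  refine ⟨fun H => ?_, fun ⟨k, hk⟩ z hz => ?_⟩
  · rcases Nat.odd_mod_four_iff.1 (Nat.odd_iff.1 hodd) with h4 | h4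
    · rw [gaussF_of_mod_four_eq_one h4]
      exact H.sub_one_dvd hr h4
    · rw [gaussF_of_mod_four_eq_three h4]
      exact H.add_one_dvd hr h4
  · rw [hk, pow_mul, pow_mul]
    exact (GaussianInt.natCast_dvd_pow_gaussF_sub hr hodd hz).trans (sub_dvd_pow_sub_pow _ _ _)

theorem gaussCarmichael_two_factors (p q : ℕ) (hp : p.Prime) (hq : q.Prime)
    (hop : Odd p) (hoq : Odd q) (hpq : p < q) :
    GaussCarmichael (p * q) ↔ q = p + 2 ∧ 8 ∣ p + q := by
  have hcop : p.Coprime q := (Nat.coprime_primes hp hq).2 hpq.ne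
  have hkorselt : IsGaussFermatExponent (p * q) (gaussF (p * q)) ↔ gaussF p = gaussF q := by
    rw [isGaussFermatExponent_mul_iff hcop, isGaussFermatExponent_prime_iff hp hop,
      isGaussFermatExponent_prime_iff hq hoq, gaussF_dvd_gaussF_mul_iff hop hoq, mul_comm,
      gaussF_dvd_gaussF_mul_iff hoq hop]
    exact ⟨fun h => Nat.dvd_antisymm h.1 h.2, fun h => ⟨h ▸ dvd_rfl, h ▸ dvd_rfl⟩⟩
  rw [gaussCarmichael_iff, hkorselt, gaussF_eq_gaussF_iff hop hoq hpq,
    and_iff_right (Nat.one_lt_mul_iff.2 ⟨hp.pos, hq.pos, Or.inl hp.one_lt⟩),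
    and_iff_right (Nat.not_prime_mul hp.ne_one hq.ne_one)]
end

section
/- Any divisor of an odd Gaussian Carmichael number n is a Gaussian cyclic number, i.e., gcd(Φ(d), d) = 1 for every d | n. -/
/-- `gPhi n` is the number of norm-one elements of `ℤ[i]/nℤ[i]`. -/
noncomputable def gPhi (n : ℕ) : ℕ :=
  Nat.card {x : ZMod n × ZMod n // x.1 ^ 2 + x.2 ^ 2 = 1}

/-!
Let a prime `q` divide both `d` and `Φ(d)`, the order of the group of norm-one elements of
`ℤ[i]/dℤ[i]`; by Cauchy's theorem this group has an element `w` of order `q`. Since `q` is odd,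
`1 + w` divides `1 + w^q = 2`, so it is a unit, and `1 + w = w · conj(1 + w)`. Lift `1 + w` to a
Gaussian integer whose norm is prime to `n` (Chinese remainder theorem); the Carmichael property
then gives `(1 + w)^F = conj(1 + w)^F` for `F = n ∓ 1`, hence `w^F = 1`, so `q` divides
`gcd(F, n) = 1`.
-/

open scoped QuadraticAlgebra

/-- `ℤ[i] / d ℤ[i]`. -/
abbrev GaussianZMod (d : ℕ) : Type := QuadraticAlgebra (ZMod d) (-1) 0

instance {d : ℕ} [NeZero d] : Finite (GaussianZMod d) :=
  .of_equiv _ (QuadraticAlgebra.equivProd _ _).symm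

lemma gPhi_eq_card_unitary (d : ℕ) : gPhi d = Nat.card (unitary (GaussianZMod d)) :=
  Nat.card_congr <| (QuadraticAlgebra.equivProd (-1 : ZMod d) 0).symm.subtypeEquiv fun x => by
    rw [← QuadraticAlgebra.norm_eq_one_iff_mem_unitary, QuadraticAlgebra.norm_def]
    simp [sq]

lemma GaussianZMod.isUnit_two {d : ℕ} (hd : Odd d) : IsUnit (2 : GaussianZMod d) := by
  have : IsUnit (2 : ZMod d) := by
    exact_mod_cast (ZMod.isUnit_iff_coprime 2 d).2 (Nat.coprime_two_left.2 hd)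
  simpa only [map_ofNat] using this.map (algebraMap (ZMod d) (GaussianZMod d))

lemma Int.isCoprime_natCast_of_forall_prime_dvd {m n : ℕ} {a : ℤ} (h : IsCoprime (m : ℤ) a)
    (hnm : ∀ p, p.Prime → p ∣ n → p ∣ m) : IsCoprime (n : ℤ) a := by
  rw [Int.isCoprime_iff_gcd_eq_one] at h ⊢
  refine Nat.coprime_of_dvd fun p hp hpn hpa => hp.ne_one ?_
  simp only [Int.natAbs_natCast] at hpn
  exact Nat.Coprime.eq_one_of_dvd (Nat.Coprime.coprime_dvd_left (hnm p hp hpn) h) hpa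

namespace GaussianInt

def toZMod (d : ℕ) : GaussianInt →+* GaussianZMod d where
  toFun z := ⟨z.re, z.im⟩
  map_one' := by ext <;> simp
  map_mul' z w := by ext <;> simp
  map_zero' := by ext <;> simp
  map_add' z w := by ext <;> simp

variable {d : ℕ}

@[simp] lemma toZMod_re (z : GaussianInt) : (toZMod d z).re = z.re := by simp [toZMod]

@[simp] lemma toZMod_im (z : GaussianInt) : (toZMod d z).im = z.im := by simp [toZMod]

lemma toZMod_star (z : GaussianInt) : toZMod d (star z) = star (toZMod d z) := by
  ext <;> simp

lemma norm_toZMod (z : GaussianInt) : (toZMod d z).norm = (z.norm : ZMod d) := by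
  simp [QuadraticAlgebra.norm_def, Zsqrtd.norm_def]

lemma toZMod_surjective : Function.Surjective (toZMod d) := fun x =>
  ⟨⟨(ZMod.intCast_surjective x.re).choose, (ZMod.intCast_surjective x.im).choose⟩, by
    ext <;> simp [Exists.choose_spec (ZMod.intCast_surjective _)]⟩

lemma toZMod_eq_zero_of_dvd {z : GaussianInt} (h : (d : GaussianInt) ∣ z) : toZMod d z = 0 := by
  obtain ⟨c, rfl⟩ := h
  have : toZMod d d = 0 := by ext <;> simp
  rw [map_mul, this, zero_mul]

lemma isCoprime_norm_of_isUnit_toZMod {z : GaussianInt} (h : IsUnit (toZMod d z)) :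
    IsCoprime (d : ℤ) z.norm := by
  rwa [QuadraticAlgebra.isUnit_iff_norm_isUnit, norm_toZMod,
    ZMod.coe_int_isUnit_iff_isCoprime] at h

lemma exists_toZMod_eq_isCoprime_norm {n : ℕ} (hn : n ≠ 0) {x : GaussianZMod d}
    (hx : IsUnit x) : ∃ z : GaussianInt, toZMod d z = x ∧ IsCoprime (n : ℤ) z.norm := by
  classical
  -- `z ≡ z₀ [d]` keeps the norm a unit at the primes of `d`, `z ≡ 1 [b]` at the other
  -- primes of `n`.
  set b := ∏ p ∈ n.primeFactors with ¬ p ∣ d, p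
  have hdb : Nat.Coprime d b := Nat.Coprime.prod_right fun p hp => by
    rw [Finset.mem_filter] at hp
    exact Nat.coprime_comm.1 ((Nat.prime_of_mem_primeFactors hp.1).coprime_iff_not_dvd.2 hp.2)
  obtain ⟨u, v, huv⟩ := Nat.isCoprime_iff_coprime.2 hdb
  have huv' : (u : GaussianInt) * d + v * b = 1 := by exact_mod_cast huv
  obtain ⟨z₀, rfl⟩ := toZMod_surjective x
  set z := v * b * z₀ + u * d
  have hzd : toZMod d z = toZMod d z₀ := by
    rw [show z = z₀ + d * (u * (1 - z₀)) by linear_combination z₀ * huv', map_add,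
      toZMod_eq_zero_of_dvd (dvd_mul_right _ _), add_zero]
  have hzb : toZMod b z = 1 := by
    rw [show z = 1 + b * (v * (z₀ - 1)) by linear_combination huv', map_add,
      toZMod_eq_zero_of_dvd (dvd_mul_right _ _), add_zero, map_one]
  refine ⟨z, hzd, Int.isCoprime_natCast_of_forall_prime_dvd (m := d * b) ?_ fun p hp hpn => ?_⟩
  · push_cast
    exact (isCoprime_norm_of_isUnit_toZMod (hzd ▸ hx)).mul_left
      (isCoprime_norm_of_isUnit_toZMod (hzb ▸ isUnit_one))
  · by_cases hpd : p ∣ d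
    · exact hpd.mul_right _
    · exact (Finset.dvd_prod_of_mem _ (by simp [hp, hpn, hn, hpd])).mul_left _

end GaussianInt

lemma isUnit_one_add_of_pow_eq_one {R : Type*} [CommRing R] (h2 : IsUnit (2 : R)) {q : ℕ}
    (hq : Odd q) {w : R} (hw : w ^ q = 1) : IsUnit (1 + w) :=
  isUnit_of_dvd_unit (by simpa [hw, one_add_one_eq_two] using hq.add_dvd_pow_add_pow 1 w) h2

section StarRing

variable {R : Type*} [CommRing R] [StarRing R] {w : R}

lemma one_add_eq_mul_star_one_add (hw : w ∈ unitary R) : 1 + w = w * star (1 + w) := by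
  rw [star_add, star_one, mul_add, mul_one, Unitary.mul_star_self_of_mem hw, add_comm]

lemma pow_eq_one_of_pow_one_add_eq_pow_star (hw : w ∈ unitary R) (hu : IsUnit (1 + w)) {k : ℕ}
    (h : (1 + w) ^ k = star (1 + w) ^ k) : w ^ k = 1 := by
  refine (hu.star.pow k).mul_left_cancel ?_
  rw [mul_one, ← mul_pow, mul_comm, ← one_add_eq_mul_star_one_add hw, h]

end StarRing

lemma coprime_gaussF {n : ℕ} (hn : Odd n) : Nat.Coprime (gaussF n) n := by
  have := Nat.odd_iff.1 hn
  unfold gaussF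
  split_ifs
  · exact (Nat.coprime_self_sub_left (by omega)).2 (Nat.coprime_one_left n)
  · exact Nat.coprime_self_add_left.2 (Nat.coprime_one_left n)
  · omega

open GaussianInt in
lemma GaussCarmichael.pow_gaussF_eq_one {n d : ℕ} (h : GaussCarmichael n) (hdn : d ∣ n)
    {w : GaussianZMod d} (hw : w ∈ unitary _) (hu : IsUnit (1 + w)) : w ^ gaussF n = 1 := by
  obtain ⟨hn, -, hcar⟩ := h
  obtain ⟨z, hz, hzn⟩ := exists_toZMod_eq_isCoprime_norm (n := n) (by omega) hu
  refine pow_eq_one_of_pow_one_add_eq_pow_star hw hu ?_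
  rw [← hz, ← toZMod_star, ← map_pow, ← map_pow, ← sub_eq_zero, ← map_sub]
  exact toZMod_eq_zero_of_dvd ((Nat.cast_dvd_cast hdn).trans (hcar z hzn))

theorem divisor_of_gaussCarmichael_is_cyclic (n : ℕ) (ho : Odd n)
    (h : GaussCarmichael n) : ∀ d : ℕ, d ∣ n → Nat.Coprime (gPhi d) d := by
  intro d hdn
  have hd : Odd d := ho.of_dvd_nat hdn
  have : NeZero d := ⟨hd.pos.ne'⟩
  refine Nat.coprime_of_dvd fun q hq hqΦ hqd => hq.ne_one ?_
  have : Fact q.Prime := ⟨hq⟩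
  rw [gPhi_eq_card_unitary] at hqΦ
  obtain ⟨w, hwq⟩ := exists_prime_orderOf_dvd_card' q hqΦ
  rw [← orderOf_submonoid] at hwq
  have hu : IsUnit (1 + (w : GaussianZMod d)) :=
    isUnit_one_add_of_pow_eq_one (GaussianZMod.isUnit_two hd) (hd.of_dvd_nat hqd)
      (hwq ▸ pow_orderOf_eq_one _)
  have hqF : q ∣ gaussF n := hwq ▸ orderOf_dvd_of_pow_eq_one (h.pow_gaussF_eq_one hdn w.2 hu)
  exact ((coprime_gaussF ho).coprime_dvd_left hqF).eq_one_of_dvd (hqd.trans hdn)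
end
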